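/- arXiv:2311.14050 — 2 statements merged into one kernel-verified Lean document; each statement's English description precedes it below -/
import Mathlib

section
/- If g is twice continuously differentiable, γ = 1 + O(Δt^{p-1}) with p ≥ 2, and u^{n+1} - u^n_γ = O(Δt), then g(u^{n+1}_γ) = g(u^n_γ) + γ(g(u^{n+1}) - g(u^n_γ)) + O(Δt^{p+1}), where u^{n+1}_γ = u^n_γ + γ(u^{n+1} - u^n_γ). -/
/-!
Along the line `x + τ • v`, the function `τ ↦ g (x + τ • γ • v) - γ • g (x + τ • v)` has derivative
`γ • (g' (x + τ • γ • v) - g' (x + τ • v)) v`. As `g'` is `M`-Lipschitz (with `M` bounding `g''`),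
this has norm at most `M |γ| |γ - 1| ‖v‖² τ`, so integrating over `[0, 1]` bounds the defect
`g (x + γ • v) - g x - γ • (g (x + v) - g x)` by `M / 2 · |γ| |γ - 1| ‖v‖²`. With
`|γ - 1| = O(Δt ^ (p - 1))` and `‖v‖ = O(Δt)` this is `O(Δt ^ (p + 1))`.
-/

open Set

theorem abs_mul_abs_sub_one_le_sq_add {γ a : ℝ} (h : |γ - 1| ≤ a) :
    |γ| * |γ - 1| ≤ a ^ 2 + a := by
  have hγ : |γ| ≤ |γ - 1| + 1 := by simpa using abs_add_le (γ - 1) 1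
  nlinarith [abs_nonneg γ, abs_nonneg (γ - 1)]

theorem sq_add_mul_sq_le_mul_pow {C₁ C₂ h : ℝ} (h0 : 0 ≤ h) (h1 : h ≤ 1) (q : ℕ) :
    ((C₁ * h ^ q) ^ 2 + C₁ * h ^ q) * (C₂ * h) ^ 2
      ≤ (C₁ ^ 2 * C₂ ^ 2 + C₁ * C₂ ^ 2) * h ^ (q + 2) := by
  have hpow : h ^ (2 * q + 2) ≤ h ^ (q + 2) := pow_le_pow_of_le_one h0 h1 (by omega)
  calc ((C₁ * h ^ q) ^ 2 + C₁ * h ^ q) * (C₂ * h) ^ 2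
      = C₁ ^ 2 * C₂ ^ 2 * h ^ (2 * q + 2) + C₁ * C₂ ^ 2 * h ^ (q + 2) := by ring
    _ ≤ C₁ ^ 2 * C₂ ^ 2 * h ^ (q + 2) + C₁ * C₂ ^ 2 * h ^ (q + 2) := by gcongr
    _ = (C₁ ^ 2 * C₂ ^ 2 + C₁ * C₂ ^ 2) * h ^ (q + 2) := by ring

section SecondOrderSecant

variable {E F : Type*} [NormedAddCommGroup E] [NormedSpace ℝ E]
  [NormedAddCommGroup F] [NormedSpace ℝ F]

theorem hasDerivAt_comp_add_smul_sub_smul_comp_add_smul {f : E → F} {f' : E → E →L[ℝ] F}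
    {x v : E} {γ t : ℝ} (h₁ : HasFDerivAt f (f' (x + t • γ • v)) (x + t • γ • v))
    (h₂ : HasFDerivAt f (f' (x + t • v)) (x + t • v)) :
    HasDerivAt (fun τ : ℝ => f (x + τ • γ • v) - γ • f (x + τ • v))
      (γ • (f' (x + t • γ • v) - f' (x + t • v)) v) t := by
  have hline : ∀ w : E, HasDerivAt (fun τ : ℝ => x + τ • w) w t := fun w => by
    simpa using ((hasDerivAt_id t).smul_const w).const_add x
  refine ((h₁.comp_hasDerivAt t (hline (γ • v))).sub
    ((h₂.comp_hasDerivAt t (hline v)).const_smul γ)).congr_deriv ?_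
  rw [sub_apply, map_smul, smul_sub]

theorem Convex.norm_image_add_smul_sub_secant_le {f : E → F} {f' : E → E →L[ℝ] F} {s : Set E}
    {M γ : ℝ} {x v : E} (hs : Convex ℝ s) (hf : ∀ y ∈ s, HasFDerivAt f (f' y) y)
    (hf' : ∀ y ∈ s, ∀ z ∈ s, ‖f' z - f' y‖ ≤ M * ‖z - y‖)
    (hx : x ∈ s) (hxv : x + v ∈ s) (hxγv : x + γ • v ∈ s) :
    ‖f (x + γ • v) - f x - γ • (f (x + v) - f x)‖ ≤ M / 2 * (|γ| * |γ - 1| * ‖v‖ ^ 2) := by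
  set K := M * (|γ| * |γ - 1| * ‖v‖ ^ 2)
  set φ : ℝ → F := fun τ => f (x + τ • γ • v) - γ • f (x + τ • v) - (f x - γ • f x)
  have hderiv : ∀ t ∈ Icc (0 : ℝ) 1,
      HasDerivAt φ (γ • (f' (x + t • γ • v) - f' (x + t • v)) v) t := fun t ht =>
    (hasDerivAt_comp_add_smul_sub_smul_comp_add_smul (hf _ (hs.add_smul_mem hx hxγv ht))
      (hf _ (hs.add_smul_mem hx hxv ht))).sub_const _
  have hbound : ∀ t ∈ Ico (0 : ℝ) 1,
      ‖γ • (f' (x + t • γ • v) - f' (x + t • v)) v‖ ≤ K * t := fun t ht => by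
    have ht' := Ico_subset_Icc_self ht
    have hdiff : x + t • γ • v - (x + t • v) = (t * (γ - 1)) • v := by module
    calc ‖γ • (f' (x + t • γ • v) - f' (x + t • v)) v‖
        ≤ |γ| * (‖f' (x + t • γ • v) - f' (x + t • v)‖ * ‖v‖) := by
          rw [norm_smul, Real.norm_eq_abs]
          gcongr
          exact ContinuousLinearMap.le_opNorm _ _
      _ ≤ |γ| * (M * ‖(t * (γ - 1)) • v‖ * ‖v‖) := by
          rw [← hdiff]
          gcongr
          exact hf' _ (hs.add_smul_mem hx hxv ht') _ (hs.add_smul_mem hx hxγv ht')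
      _ = K * t := by
          rw [norm_smul, Real.norm_eq_abs, abs_mul, abs_of_nonneg ht.1]
          ring
  have hB : ∀ t : ℝ, HasDerivAt (fun τ => K / 2 * τ ^ 2) (K * t) t := fun t => by
    refine ((hasDerivAt_pow 2 t).const_mul (K / 2)).congr_deriv ?_
    push_cast
    ring
  have hfence := image_norm_le_of_norm_deriv_right_le_deriv_boundary
    (fun t ht => (hderiv t ht).continuousAt.continuousWithinAt)
    (fun t ht => (hderiv t (Ico_subset_Icc_self ht)).hasDerivWithinAt)
    (by simp [φ]) hB hbound (right_mem_Icc.mpr zero_le_one)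
  have hφ1 : φ 1 = f (x + γ • v) - f x - γ • (f (x + v) - f x) := by
    simp only [φ, one_smul]
    module
  calc _ = ‖φ 1‖ := by rw [hφ1]
    _ ≤ K / 2 * 1 ^ 2 := hfence
    _ = _ := by ring

end SecondOrderSecant

theorem stmt_2_general {N M : ℕ}
    (g : EuclideanSpace ℝ (Fin N) → EuclideanSpace ℝ (Fin M))
    (g' : EuclideanSpace ℝ (Fin N) →
      EuclideanSpace ℝ (Fin N) →L[ℝ] EuclideanSpace ℝ (Fin M))
    (g'' : EuclideanSpace ℝ (Fin N) →
      EuclideanSpace ℝ (Fin N) →L[ℝ]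
        (EuclideanSpace ℝ (Fin N) →L[ℝ] EuclideanSpace ℝ (Fin M)))
    (U : Set (EuclideanSpace ℝ (Fin N))) (hUc : Convex ℝ U)
    (hg : ∀ x ∈ U, HasFDerivAt g (g' x) x)
    (hg' : ∀ x ∈ U, HasFDerivAt g' (g'' x) x)
    (M₂ : ℝ) (hM₂ : ∀ x ∈ U, ‖g'' x‖ ≤ M₂)
    (p : ℕ) (hp : 2 ≤ p) (Δt C₁ C₂ γ : ℝ) (hΔt : 0 < Δt) (hΔt1 : Δt ≤ 1)
    (uγ unp1 unp1γ : EuclideanSpace ℝ (Fin N))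
    (hγ : |γ - 1| ≤ C₁ * Δt ^ (p - 1))
    (hu : ‖unp1 - uγ‖ ≤ C₂ * Δt)
    (hdef : unp1γ = uγ + γ • (unp1 - uγ))
    (h0 : uγ ∈ U) (h1 : unp1 ∈ U) (h2 : unp1γ ∈ U) :
    ‖g unp1γ - g uγ - γ • (g unp1 - g uγ)‖
      ≤ (M₂ / 2) * (C₁ ^ 2 * C₂ ^ 2 + C₁ * C₂ ^ 2) * Δt ^ (p + 1) := by
  have hM₂0 : 0 ≤ M₂ := (norm_nonneg (g'' uγ)).trans (hM₂ uγ h0)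
  have hlip : ∀ x ∈ U, ∀ y ∈ U, ‖g' y - g' x‖ ≤ M₂ * ‖y - x‖ := fun x hx y hy =>
    hUc.norm_image_sub_le_of_norm_hasFDerivWithin_le
      (fun z hz => (hg' z hz).hasFDerivWithinAt) hM₂ hx hy
  have hsecant := hUc.norm_image_add_smul_sub_secant_le hg hlip h0
    (by rwa [add_sub_cancel]) (hdef ▸ h2)
  rw [add_sub_cancel, ← hdef] at hsecant
  have ha : 0 ≤ C₁ * Δt ^ (p - 1) := (abs_nonneg _).trans hγ
  have hfactor : |γ| * |γ - 1| * ‖unp1 - uγ‖ ^ 2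
      ≤ ((C₁ * Δt ^ (p - 1)) ^ 2 + C₁ * Δt ^ (p - 1)) * (C₂ * Δt) ^ 2 :=
    mul_le_mul (abs_mul_abs_sub_one_le_sq_add hγ)
      (pow_le_pow_left₀ (norm_nonneg _) hu 2) (sq_nonneg _) (add_nonneg (sq_nonneg _) ha)
  have hpow := sq_add_mul_sq_le_mul_pow (C₁ := C₁) (C₂ := C₂) hΔt.le hΔt1 (p - 1)
  rw [show p - 1 + 2 = p + 1 by omega] at hpow
  calc _ ≤ M₂ / 2 * (|γ| * |γ - 1| * ‖unp1 - uγ‖ ^ 2) := hsecant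
    _ ≤ M₂ / 2 * ((C₁ ^ 2 * C₂ ^ 2 + C₁ * C₂ ^ 2) * Δt ^ (p + 1)) :=
      mul_le_mul_of_nonneg_left (hfactor.trans hpow) (by linarith)
    _ = _ := by ring

/-- If `g` is twice continuously differentiable with second derivative bounded by `M₂`
on an open convex set containing the relevant points, `γ = 1 + O(Δt^(p-1))` with `p ≥ 2`,
and `u^{n+1} - u^n_γ = O(Δt)`, then
`g(u^{n+1}_γ) = g(u^n_γ) + γ(g(u^{n+1}) - g(u^n_γ)) + O(Δt^(p+1))`. -/
theorem stmt_2 {N M : ℕ}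
    (g : EuclideanSpace ℝ (Fin N) → EuclideanSpace ℝ (Fin M))
    (g' : EuclideanSpace ℝ (Fin N) →
      EuclideanSpace ℝ (Fin N) →L[ℝ] EuclideanSpace ℝ (Fin M))
    (g'' : EuclideanSpace ℝ (Fin N) →
      EuclideanSpace ℝ (Fin N) →L[ℝ]
        (EuclideanSpace ℝ (Fin N) →L[ℝ] EuclideanSpace ℝ (Fin M)))
    (U : Set (EuclideanSpace ℝ (Fin N))) (hU : IsOpen U) (hUc : Convex ℝ U)
    (hg : ∀ x ∈ U, HasFDerivAt g (g' x) x)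
    (hg' : ∀ x ∈ U, HasFDerivAt g' (g'' x) x)
    (hg'cont : ContinuousOn g'' U)
    (M₂ : ℝ) (hM₂ : ∀ x ∈ U, ‖g'' x‖ ≤ M₂)
    (p : ℕ) (hp : 2 ≤ p) (Δt C₁ C₂ γ : ℝ) (hΔt : 0 < Δt) (hΔt1 : Δt ≤ 1)
    (uγ unp1 unp1γ : EuclideanSpace ℝ (Fin N))
    (hγ : |γ - 1| ≤ C₁ * Δt ^ (p - 1))
    (hu : ‖unp1 - uγ‖ ≤ C₂ * Δt)
    (hdef : unp1γ = uγ + γ • (unp1 - uγ))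
    (h0 : uγ ∈ U) (h1 : unp1 ∈ U) (h2 : unp1γ ∈ U) :
    ‖g unp1γ - g uγ - γ • (g unp1 - g uγ)‖
      ≤ (M₂ / 2) * (C₁ ^ 2 * C₂ ^ 2 + C₁ * C₂ ^ 2) * Δt ^ (p + 1) :=
  stmt_2_general g g' g'' U hUc hg hg' M₂ hM₂ p hp Δt C₁ C₂ γ hΔt hΔt1 uγ unp1 unp1γ hγ hu hdef h0
    h1 h2
end

section
/- If g is twice continuously differentiable, γ = 1 + O(Δt^{p-1}) with p ≥ 2 (so γ is bounded away from 0 for small Δt), and u^{n+1} - u^n_γ = O(Δt), then g(u^{n+1}) = g(u^n_γ) + (1/γ)(g(u^{n+1}_γ) - g(u^n_γ)) + O(Δt^{p+1}). -/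
/-!
With `e := v - u`, compare the two paths `t ↦ u + t • (γ • e)` and `t ↦ u + t • e` through
`φ t := γ⁻¹ • g (u + t • (γ • e)) - g (u + t • e)`. The factor `γ⁻¹` cancels the speed of the
first path, so `φ' t = (g' (u + t • (γ • e)) - g' (u + t • e)) e`, and the two base points are
`t * |γ - 1| * ‖e‖` apart. Hence `‖φ'‖ ≤ M * |γ - 1| * ‖e‖ ^ 2`, and the mean value inequality on
`[0, 1]` bounds the defect `φ 1 - φ 0` by that. With `|γ - 1| = O(Δt ^ (p - 1))` and
`‖e‖ = O(Δt)` this is `O(Δt ^ (p + 1))`.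
-/

section SecondOrder

variable {E F : Type*} [NormedAddCommGroup E] [NormedSpace ℝ E]
  [NormedAddCommGroup F] [NormedSpace ℝ F]

theorem HasFDerivAt.hasDerivAt_comp_add_smul {g : E → F} {g' : E →L[ℝ] F} {u d : E} {t : ℝ}
    (h : HasFDerivAt g g' (u + t • d)) :
    HasDerivAt (fun s : ℝ => g (u + s • d)) (g' d) t := by
  have hline : HasDerivAt (fun s : ℝ => u + s • d) d t := by
    simpa using ((hasDerivAt_id t).smul_const d).const_add u
  exact h.comp_hasDerivAt t hline

variable {g : E → F} {g' : E → E →L[ℝ] F} {g'' : E → E →L[ℝ] E →L[ℝ] F} {s : Set E} {M : ℝ}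

theorem Convex.norm_fderiv_apply_sub_le (hs : Convex ℝ s)
    (hg' : ∀ x ∈ s, HasFDerivAt g' (g'' x) x) (hM : ∀ x ∈ s, ‖g'' x‖ ≤ M)
    {a b : E} (ha : a ∈ s) (hb : b ∈ s) (d : E) :
    ‖g' a d - g' b d‖ ≤ M * ‖a - b‖ * ‖d‖ :=
  calc ‖g' a d - g' b d‖ = ‖(g' a - g' b) d‖ := rfl
    _ ≤ ‖g' a - g' b‖ * ‖d‖ := (g' a - g' b).le_opNorm d
    _ ≤ M * ‖a - b‖ * ‖d‖ := by
      gcongr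
      exact hs.norm_image_sub_le_of_norm_hasFDerivWithin_le
        (fun x hx => (hg' x hx).hasFDerivWithinAt) hM hb ha

theorem Convex.norm_inv_smul_increment_sub_increment_le (hs : Convex ℝ s)
    (hg : ∀ x ∈ s, HasFDerivAt g (g' x) x) (hg' : ∀ x ∈ s, HasFDerivAt g' (g'' x) x)
    (hM : ∀ x ∈ s, ‖g'' x‖ ≤ M) {u v : E} {γ : ℝ} (hγ : γ ≠ 0)
    (hu : u ∈ s) (hv : v ∈ s) (hw : u + γ • (v - u) ∈ s) :
    ‖γ⁻¹ • (g (u + γ • (v - u)) - g u) - (g v - g u)‖ ≤ M * |γ - 1| * ‖v - u‖ ^ 2 := by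
  set e := v - u
  have hseg : ∀ t ∈ Set.Icc (0 : ℝ) 1, u + t • (γ • e) ∈ s ∧ u + t • e ∈ s := fun t ht =>
    ⟨by simpa only [add_sub_cancel_left] using hs.add_smul_sub_mem hu hw ht,
      hs.add_smul_sub_mem hu hv ht⟩
  have hφ : ∀ t ∈ Set.Icc (0 : ℝ) 1,
      HasDerivAt (fun t : ℝ => γ⁻¹ • g (u + t • (γ • e)) - g (u + t • e))
        (g' (u + t • (γ • e)) e - g' (u + t • e) e) t := by
    intro t ht
    obtain ⟨hwt, hvt⟩ := hseg t ht
    have hd := ((hg _ hwt).hasDerivAt_comp_add_smul.const_smul γ⁻¹).sub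
      (hg _ hvt).hasDerivAt_comp_add_smul
    rwa [map_smul, inv_smul_smul₀ hγ] at hd
  have hφ' : ∀ t ∈ Set.Ico (0 : ℝ) 1,
      ‖g' (u + t • (γ • e)) e - g' (u + t • e) e‖ ≤ M * |γ - 1| * ‖e‖ ^ 2 := by
    intro t ht
    obtain ⟨hwt, hvt⟩ := hseg t (Set.Ico_subset_Icc_self ht)
    have hdist : ‖u + t • (γ • e) - (u + t • e)‖ ≤ |γ - 1| * ‖e‖ := by
      rw [show u + t • (γ • e) - (u + t • e) = (t * (γ - 1)) • e by module, norm_smul,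
        Real.norm_eq_abs, abs_mul, abs_of_nonneg ht.1, mul_assoc]
      exact mul_le_of_le_one_left (by positivity) ht.2.le
    have hM0 : 0 ≤ M := (norm_nonneg (g'' u)).trans (hM u hu)
    calc ‖g' (u + t • (γ • e)) e - g' (u + t • e) e‖
        ≤ M * ‖u + t • (γ • e) - (u + t • e)‖ * ‖e‖ :=
          hs.norm_fderiv_apply_sub_le hg' hM hwt hvt e
      _ ≤ M * (|γ - 1| * ‖e‖) * ‖e‖ := by gcongr
      _ = M * |γ - 1| * ‖e‖ ^ 2 := by ring
  have hmv := norm_image_sub_le_of_norm_deriv_le_segment_01'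
    (fun t ht => (hφ t ht).hasDerivWithinAt) hφ'
  have hv' : u + e = v := add_sub_cancel u v
  simp only [one_smul, zero_smul, add_zero, hv'] at hmv
  convert hmv using 2
  rw [smul_sub]
  abel

end SecondOrder

theorem stmt_3_general {N M : ℕ}
    (g : EuclideanSpace ℝ (Fin N) → EuclideanSpace ℝ (Fin M))
    (g' : EuclideanSpace ℝ (Fin N) →
      EuclideanSpace ℝ (Fin N) →L[ℝ] EuclideanSpace ℝ (Fin M))
    (g'' : EuclideanSpace ℝ (Fin N) →
      EuclideanSpace ℝ (Fin N) →L[ℝ]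
        (EuclideanSpace ℝ (Fin N) →L[ℝ] EuclideanSpace ℝ (Fin M)))
    (U : Set (EuclideanSpace ℝ (Fin N))) (hUc : Convex ℝ U)
    (hg : ∀ x ∈ U, HasFDerivAt g (g' x) x)
    (hg' : ∀ x ∈ U, HasFDerivAt g' (g'' x) x)
    (M₂ : ℝ) (hM₂ : ∀ x ∈ U, ‖g'' x‖ ≤ M₂)
    (p : ℕ) (hp : 2 ≤ p) (Δt C₁ C₂ γ : ℝ) (hΔt : 0 < Δt)
    (hγhalf : (1 : ℝ) / 2 ≤ γ)
    (uγ unp1 unp1γ : EuclideanSpace ℝ (Fin N))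
    (hγ : |γ - 1| ≤ C₁ * Δt ^ (p - 1))
    (hu : ‖unp1 - uγ‖ ≤ C₂ * Δt)
    (hdef : unp1γ = uγ + γ • (unp1 - uγ))
    (h0 : uγ ∈ U) (h1 : unp1 ∈ U) (h2 : unp1γ ∈ U) :
    ‖g uγ + γ⁻¹ • (g unp1γ - g uγ) - g unp1‖
      ≤ M₂ * (C₁ ^ 2 * C₂ ^ 2 + C₁ * C₂ ^ 2) * Δt ^ (p + 1) := by
  subst hdef
  have hM₂0 : 0 ≤ M₂ := (norm_nonneg (g'' uγ)).trans (hM₂ uγ h0)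
  have hC₁0 : 0 ≤ C₁ := nonneg_of_mul_nonneg_left ((abs_nonneg _).trans hγ) (by positivity)
  have hpow : Δt ^ (p - 1) * Δt ^ 2 = Δt ^ (p + 1) := by rw [← pow_add]; congr 1; omega
  calc ‖g uγ + γ⁻¹ • (g (uγ + γ • (unp1 - uγ)) - g uγ) - g unp1‖
      = ‖γ⁻¹ • (g (uγ + γ • (unp1 - uγ)) - g uγ) - (g unp1 - g uγ)‖ := by congr 1; abel
    _ ≤ M₂ * |γ - 1| * ‖unp1 - uγ‖ ^ 2 :=
        hUc.norm_inv_smul_increment_sub_increment_le hg hg' hM₂ (by linarith) h0 h1 h2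
    _ ≤ M₂ * (C₁ * Δt ^ (p - 1)) * (C₂ * Δt) ^ 2 := by gcongr
    _ = M₂ * (C₁ * C₂ ^ 2) * Δt ^ (p + 1) := by rw [← hpow]; ring
    _ ≤ M₂ * (C₁ ^ 2 * C₂ ^ 2 + C₁ * C₂ ^ 2) * Δt ^ (p + 1) := by
        gcongr
        exact le_add_of_nonneg_left (by positivity)

/-- If `g` is C² with bounded second derivative, `γ = 1 + O(Δt^(p-1))` with `p ≥ 2`
(and `γ ≥ 1/2` for small `Δt`), and `u^{n+1} - u^n_γ = O(Δt)`, then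
`g(u^{n+1}) = g(u^n_γ) + (1/γ)(g(u^{n+1}_γ) - g(u^n_γ)) + O(Δt^(p+1))`. -/
theorem stmt_3 {N M : ℕ}
    (g : EuclideanSpace ℝ (Fin N) → EuclideanSpace ℝ (Fin M))
    (g' : EuclideanSpace ℝ (Fin N) →
      EuclideanSpace ℝ (Fin N) →L[ℝ] EuclideanSpace ℝ (Fin M))
    (g'' : EuclideanSpace ℝ (Fin N) →
      EuclideanSpace ℝ (Fin N) →L[ℝ]
        (EuclideanSpace ℝ (Fin N) →L[ℝ] EuclideanSpace ℝ (Fin M)))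
    (U : Set (EuclideanSpace ℝ (Fin N))) (hU : IsOpen U) (hUc : Convex ℝ U)
    (hg : ∀ x ∈ U, HasFDerivAt g (g' x) x)
    (hg' : ∀ x ∈ U, HasFDerivAt g' (g'' x) x)
    (hg'cont : ContinuousOn g'' U)
    (M₂ : ℝ) (hM₂ : ∀ x ∈ U, ‖g'' x‖ ≤ M₂)
    (p : ℕ) (hp : 2 ≤ p) (Δt C₁ C₂ γ : ℝ) (hΔt : 0 < Δt) (hΔt1 : Δt ≤ 1)
    (hγhalf : (1 : ℝ) / 2 ≤ γ)
    (uγ unp1 unp1γ : EuclideanSpace ℝ (Fin N))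
    (hγ : |γ - 1| ≤ C₁ * Δt ^ (p - 1))
    (hu : ‖unp1 - uγ‖ ≤ C₂ * Δt)
    (hdef : unp1γ = uγ + γ • (unp1 - uγ))
    (h0 : uγ ∈ U) (h1 : unp1 ∈ U) (h2 : unp1γ ∈ U) :
    ‖g uγ + γ⁻¹ • (g unp1γ - g uγ) - g unp1‖
      ≤ M₂ * (C₁ ^ 2 * C₂ ^ 2 + C₁ * C₂ ^ 2) * Δt ^ (p + 1) :=
  stmt_3_general g g' g'' U hUc hg hg' M₂ hM₂ p hp Δt C₁ C₂ γ hΔt hγhalf uγ unp1 unp1γ hγ hu hdef h0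
    h1 h2
end
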